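/- arXiv:2505.19710 — 3 statements merged into one kernel-verified Lean document; each statement's English description precedes it below -/
import Mathlib

section
/- Let T > 0, n ≥ 1, let μ_1, …, μ_n be positive real numbers and c_1, …, c_n real numbers, and define r(t) = Σ_{k=1}^n c_k sin(μ_k t). Then for all f, g ∈ L²(0, T): ∫₀ᵀ ∫₀ᵀ ( ∫_{|t−s|}^{2T−t−s} r(τ) dτ ) f(s) g(t) ds dt = Σ_{k=1}^n (2 c_k / μ_k) · (∫₀ᵀ sin(μ_k (T − t)) f(t) dt) · (∫₀ᵀ sin(μ_k (T − s)) g(s) ds). -/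
/-!
For `μ ≠ 0` the kernel `∫_{|t-s|}^{2T-t-s} sin(μτ) dτ = (cos(μ(t-s)) - cos(μ(2T-t-s)))/μ`
factors, by the sum-to-product formula, as `(2/μ) sin(μ(T-t)) sin(μ(T-s))`. Hence the kernel of
`r` is a finite sum of separable kernels, and the double integral splits into products of
single integrals.
-/

open MeasureTheory intervalIntegral Finset

theorem integral_sin_mul_abs_sub (μ T t s : ℝ) (hμ : μ ≠ 0) :
    ∫ τ in |t - s|..(2 * T - t - s), Real.sin (μ * τ)
      = 2 / μ * Real.sin (μ * (T - t)) * Real.sin (μ * (T - s)) := by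
  have hcos_abs : Real.cos (μ * |t - s|) = Real.cos (μ * (t - s)) := by
    rcases abs_choice (t - s) with h | h <;> simp only [h, mul_neg, Real.cos_neg]
  rw [integral_comp_mul_left (fun x => Real.sin x) hμ, integral_sin, smul_eq_mul, hcos_abs,
    Real.cos_sub_cos]
  have hsum : (μ * (t - s) + μ * (2 * T - t - s)) / 2 = μ * (T - s) := by ring
  have hdiff : (μ * (t - s) - μ * (2 * T - t - s)) / 2 = -(μ * (T - t)) := by ring
  rw [hsum, hdiff, Real.sin_neg]
  field_simp

theorem integral_sum_sin_mul_abs_sub {ι : Type*} (S : Finset ι) (c μ : ι → ℝ)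
    (hμ : ∀ k ∈ S, μ k ≠ 0) (T t s : ℝ) :
    ∫ τ in |t - s|..(2 * T - t - s), ∑ k ∈ S, c k * Real.sin (μ k * τ)
      = ∑ k ∈ S, 2 * c k / μ k * Real.sin (μ k * (T - t)) * Real.sin (μ k * (T - s)) := by
  rw [integral_finsetSum fun k _ => (by fun_prop : Continuous fun τ =>
    c k * Real.sin (μ k * τ)).intervalIntegrable _ _]
  refine sum_congr rfl fun k hk => ?_
  rw [intervalIntegral.integral_const_mul, integral_sin_mul_abs_sub _ _ _ _ (hμ k hk)]
  ring

theorem integral_integral_sum_mul_mul {ι : Type*} (S : Finset ι) (a : ι → ℝ)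
    (u v : ι → ℝ → ℝ) (f g : ℝ → ℝ) {x y : ℝ}
    (hvf : ∀ k ∈ S, IntervalIntegrable (fun s => v k s * f s) volume x y)
    (hug : ∀ k ∈ S, IntervalIntegrable (fun t => u k t * g t) volume x y) :
    (∫ t in x..y, ∫ s in x..y, (∑ k ∈ S, a k * u k t * v k s) * f s * g t)
      = ∑ k ∈ S, a k * (∫ s in x..y, v k s * f s) * (∫ t in x..y, u k t * g t) := by
  have hinner : ∀ t, (∫ s in x..y, (∑ k ∈ S, a k * u k t * v k s) * f s * g t)
      = ∑ k ∈ S, a k * (∫ s in x..y, v k s * f s) * (u k t * g t) := by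
    intro t
    have hsplit : ∀ s, (∑ k ∈ S, a k * u k t * v k s) * f s * g t
        = ∑ k ∈ S, a k * u k t * g t * (v k s * f s) := fun s => by
      simp_rw [sum_mul]
      exact sum_congr rfl fun k _ => by ring
    simp_rw [hsplit]
    rw [integral_finsetSum fun k hk => (hvf k hk).const_mul _]
    exact sum_congr rfl fun k _ => by rw [intervalIntegral.integral_const_mul]; ring
  simp_rw [hinner]
  rw [integral_finsetSum fun k hk => (hug k hk).const_mul _]
  simp_rw [intervalIntegral.integral_const_mul]

theorem MeasureTheory.MemLp.intervalIntegrable_of_Ioo {E : Type*} [NormedAddCommGroup E]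
    {f : ℝ → E} {p : ENNReal} (hp : 1 ≤ p) {a b : ℝ} (hab : a ≤ b)
    (hf : MemLp f p (volume.restrict (Set.Ioo a b))) :
    IntervalIntegrable f volume a b :=
  (intervalIntegrable_iff_integrableOn_Ioo_of_le hab).mpr (hf.integrable hp)

theorem connecting_operator_representation_general
    (T : ℝ) (hT : 0 < T) (n : ℕ)
    (μ : Fin n → ℝ) (hμpos : ∀ k, 0 < μ k) (c : Fin n → ℝ)
    (r : ℝ → ℝ) (hr : ∀ t, r t = ∑ k, c k * Real.sin (μ k * t))
    (f g : ℝ → ℝ)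
    (hf : MemLp f 2 (volume.restrict (Set.Ioo 0 T)))
    (hg : MemLp g 2 (volume.restrict (Set.Ioo 0 T))) :
    (∫ t in (0:ℝ)..T, ∫ s in (0:ℝ)..T,
        (∫ τ in |t - s|..(2 * T - t - s), r τ) * f s * g t)
      = ∑ k, (2 * c k / μ k) *
          (∫ t in (0:ℝ)..T, Real.sin (μ k * (T - t)) * f t) *
          (∫ s in (0:ℝ)..T, Real.sin (μ k * (T - s)) * g s) := by
  obtain rfl : r = fun τ => ∑ k, c k * Real.sin (μ k * τ) := funext hr
  have hsin_mul : ∀ {h : ℝ → ℝ}, MemLp h 2 (volume.restrict (Set.Ioo 0 T)) → ∀ k,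
      IntervalIntegrable (fun x => Real.sin (μ k * (T - x)) * h x) volume 0 T :=
    fun hh k => (hh.intervalIntegrable_of_Ioo one_le_two hT.le).continuousOn_mul
      (by fun_prop : Continuous fun x => Real.sin (μ k * (T - x))).continuousOn
  simp_rw [integral_sum_sin_mul_abs_sub _ c μ (fun k _ => (hμpos k).ne') T]
  exact integral_integral_sum_mul_mul _ _ _ _ f g (fun k _ => hsin_mul hf k)
    (fun k _ => hsin_mul hg k)

/-- Representation of the connecting operator of the finite Krein–Stieltjes string in terms
of the response function `r(t) = Σ_k c_k sin(μ_k t)`: for `f, g ∈ L²(0,T)`,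
`∫₀ᵀ∫₀ᵀ (∫_{|t-s|}^{2T-t-s} r(τ) dτ) f(s) g(t) ds dt
  = Σ_k (2c_k/μ_k) (∫₀ᵀ sin(μ_k(T-t)) f(t) dt)(∫₀ᵀ sin(μ_k(T-s)) g(s) ds)`. -/
theorem connecting_operator_representation
    (T : ℝ) (hT : 0 < T) (n : ℕ) (hn : 1 ≤ n)
    (μ : Fin n → ℝ) (hμpos : ∀ k, 0 < μ k) (c : Fin n → ℝ)
    (r : ℝ → ℝ) (hr : ∀ t, r t = ∑ k, c k * Real.sin (μ k * t))
    (f g : ℝ → ℝ)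
    (hf : MemLp f 2 (volume.restrict (Set.Ioo 0 T)))
    (hg : MemLp g 2 (volume.restrict (Set.Ioo 0 T))) :
    (∫ t in (0:ℝ)..T, ∫ s in (0:ℝ)..T,
        (∫ τ in |t - s|..(2 * T - t - s), r τ) * f s * g t)
      = ∑ k, (2 * c k / μ k) *
          (∫ t in (0:ℝ)..T, Real.sin (μ k * (T - t)) * f t) *
          (∫ s in (0:ℝ)..T, Real.sin (μ k * (T - s)) * g s) :=
  connecting_operator_representation_general T hT n μ hμpos c r hr f g hf hg
end

section
/- For every natural number n and every real number a: ∫₀¹ T_{2n+1}(x) · sin(a x) / √(1 − x²) dx = (−1)ⁿ · (π/2) · J_{2n+1}(a). -/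
/-!
The substitution `x = cos θ` absorbs the weight `(1 - x²)^(-1/2) dx` into `dθ` and turns
`T_{2n+1}(x)` into `cos((2n+1)θ)`, so the left side is `∫₀^{π/2} cos((2n+1)θ) sin(a cos θ) dθ`.
In the Bessel integral, the shift `θ ↦ π/2 - θ` turns `cos((2n+1)θ - a sin θ)` into
`(-1)ⁿ sin((2n+1)θ + a cos θ)` on `[-π/2, π/2]`, whose even part is
`(-1)ⁿ cos((2n+1)θ) sin(a cos θ)`.
-/

open Polynomial Real MeasureTheory intervalIntegral

/-- The Bessel function of the first kind of integer order `m`,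
`J_m(x) = (1/π) ∫₀^π cos(mθ - x sin θ) dθ`. -/
noncomputable def besselJ (m : ℤ) (x : ℝ) : ℝ :=
  (1 / Real.pi) * ∫ θ in (0:ℝ)..Real.pi, Real.cos (m * θ - x * Real.sin θ)

open Set

theorem integral_div_sqrt_one_sub_sq_eq_integral_comp_cos {a b : ℝ} (ha : a ∈ Icc (-1) 1)
    (hb : b ∈ Icc (-1) 1) (g : ℝ → ℝ) :
    ∫ x in a..b, g x / √(1 - x ^ 2) = ∫ θ in arccos b..arccos a, g (cos θ) := by
  have hinterior : ∀ x ∈ Ioo (min b a) (max b a), -1 < x ∧ x < 1 := fun x hx =>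
    ⟨(le_min hb.1 ha.1).trans_lt hx.1, hx.2.trans_le (max_le hb.2 ha.2)⟩
  calc ∫ x in a..b, g x / √(1 - x ^ 2)
      = ∫ x in b..a, (g ∘ cos) (arccos x) * -(1 / √(1 - x ^ 2)) := by
        rw [integral_symm, ← intervalIntegral.integral_neg]
        refine integral_congr fun x hx => ?_
        have hx' : x ∈ Icc (-1) 1 := uIcc_subset_Icc hb ha hx
        simp [cos_arccos hx'.1 hx'.2, div_eq_mul_inv]
    _ = ∫ θ in arccos b..arccos a, g (cos θ) :=
        integral_comp_mul_deriv_of_deriv_nonpos (g := g ∘ cos) continuous_arccos.continuousOn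
          (fun x hx => hasDerivAt_arccos (hinterior x hx).1.ne' (hinterior x hx).2.ne)
          (fun x _ => by simp only [one_div, Left.neg_nonpos_iff]; positivity)

theorem integral_neg_self_eq_integral_add_comp_neg {E : Type*} [NormedAddCommGroup E]
    [NormedSpace ℝ E] {f : ℝ → E} {c : ℝ} (hf : IntervalIntegrable f volume (-c) c) :
    ∫ x in -c..c, f x = ∫ x in 0..c, (f x + f (-x)) := by
  have hzero : (0 : ℝ) ∈ uIcc (-c) c := by
    rcases le_total 0 c with h | h
    · exact mem_uIcc.2 (Or.inl ⟨by linarith, h⟩)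
    · exact mem_uIcc.2 (Or.inr ⟨h, by linarith⟩)
  have hleft : IntervalIntegrable f volume (-c) 0 :=
    hf.mono_set (uIcc_subset_uIcc left_mem_uIcc hzero)
  have hright : IntervalIntegrable f volume 0 c :=
    hf.mono_set (uIcc_subset_uIcc hzero right_mem_uIcc)
  have hreflect : IntervalIntegrable (fun x => f (-x)) volume 0 c := by
    simpa using ((IntervalIntegrable.iff_comp_neg).mp hleft).symm
  rw [← integral_add_adjacent_intervals hleft hright, integral_add hright hreflect,
    integral_comp_neg, neg_zero, add_comm]

theorem cos_odd_mul_pi_div_two_sub_sub_mul_sin (n : ℕ) (a u : ℝ) :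
    cos ((2 * n + 1) * (π / 2 - u) - a * sin (π / 2 - u))
      = (-1) ^ n * sin ((2 * n + 1) * u + a * cos u) := by
  rw [sin_pi_div_two_sub, ← cos_sub_pi_div_two, ← cos_nat_mul_pi_sub]
  ring_nf

theorem besselJ_two_mul_add_one (n : ℕ) (a : ℝ) :
    besselJ (2 * n + 1) a
      = (-1) ^ n * (2 / π) * ∫ θ in 0..π / 2, cos ((2 * n + 1) * θ) * sin (a * cos θ) := by
  have hshift : ∫ θ in 0..π, cos ((2 * n + 1) * θ - a * sin θ)
      = ∫ u in -(π / 2)..π / 2, cos ((2 * n + 1) * (π / 2 - u) - a * sin (π / 2 - u)) := by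
    rw [integral_comp_sub_left (fun θ => cos ((2 * n + 1) * θ - a * sin θ))]
    norm_num
  have heven_part : ∀ u, (-1) ^ n * sin ((2 * n + 1) * u + a * cos u)
      + (-1) ^ n * sin ((2 * n + 1) * -u + a * cos (-u))
      = (-1) ^ n * 2 * (cos ((2 * n + 1) * u) * sin (a * cos u)) := fun u => by
    rw [cos_neg, mul_neg, add_comm _ (a * cos u), add_comm _ (a * cos u),
      ← sub_eq_add_neg, sin_add, sin_sub]
    ring
  have hcont : Continuous fun u : ℝ => (-1) ^ n * sin ((2 * n + 1) * u + a * cos u) := by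
    fun_prop
  rw [besselJ]
  push_cast
  rw [hshift]
  simp_rw [cos_odd_mul_pi_div_two_sub_sub_mul_sin]
  rw [integral_neg_self_eq_integral_add_comp_neg (hcont.intervalIntegrable _ _)]
  simp_rw [heven_part]
  rw [intervalIntegral.integral_const_mul]
  ring

/-- For every `n : ℕ` and `a : ℝ`,
`∫₀¹ T_{2n+1}(x) sin(ax) / √(1-x²) dx = (-1)ⁿ (π/2) J_{2n+1}(a)`,
where `T` is the Chebyshev polynomial of the first kind. -/
theorem integral_chebyshevT_sin_eq_besselJ (n : ℕ) (a : ℝ) :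
    (∫ x in (0:ℝ)..1,
        (Polynomial.Chebyshev.T ℝ (2 * (n : ℤ) + 1)).eval x * Real.sin (a * x)
          / Real.sqrt (1 - x ^ 2))
      = (-1) ^ n * (Real.pi / 2) * besselJ (2 * (n : ℤ) + 1) a := by
  rw [integral_div_sqrt_one_sub_sq_eq_integral_comp_cos (by norm_num) (by norm_num),
    arccos_one, arccos_zero, besselJ_two_mul_add_one]
  simp_rw [Chebyshev.T_real_cos]
  push_cast
  have hsign : (-1 : ℝ) ^ n * (-1) ^ n = 1 := by rw [← mul_pow]; norm_num
  field_simp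
  linear_combination (-∫ θ in 0..π / 2, cos ((2 * n + 1) * θ) * sin (a * cos θ)) * hsign
end

section
/- For every natural number k ≥ 1 and every real t with 0 < t < 1: lim_{N → ∞} Σ_{j=1}^{N−1} ( J_{2j−1}(2Nt) + J_{2j+1}(2Nt) ) · sin(k j / N) = sin(k t). -/
open Real MeasureTheory Filter Finset

/-!
The Fourier coefficients of `β ↦ exp (i x sin β)` are the `J_n(x)`; two integrations by parts
give `|J_m(x)| = O(m⁻²)`, so the Fourier series converges and its imaginary part is the
Jacobi–Anger expansion `sin (x sin β) = 2 ∑ J_{2i+1}(x) sin ((2i+1)β)`. Multiplying by `cos β`,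
`sin (x sin β) cos β = ∑_{j ≥ 1} (J_{2j-1}(x) + J_{2j+1}(x)) sin (2jβ)`.
At `x = 2Nt`, `β = k/(2N)` the sum of the theorem is the partial sum over `j < N`, while
`sin (2Nt sin (k/(2N))) cos (k/(2N)) → sin (kt)`. The tail only involves orders `m ≥ 2N - 1`, which exceed `x = 2Nt` by at
least `N(1 - t)`; by the decay estimate its terms are `O((N(1 - t) + 2i)⁻²)`, so it vanishes in the
limit by dominated convergence.
-/

open Topology

lemma abs_mul_cos_le_abs (x θ : ℝ) : |x * cos θ| ≤ |x| := by
  rw [abs_mul]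
  exact mul_le_of_le_one_right (abs_nonneg x) (abs_cos_le_one θ)

lemma mul_cos_le_abs (x θ : ℝ) : x * cos θ ≤ |x| :=
  (le_abs_self _).trans (abs_mul_cos_le_abs x θ)

/- Found by integrating `cos (mθ - x sin θ)` by parts twice against
`d/dθ (mθ - x sin θ) = m - x cos θ`; the remainder integrand is `O((m - |x|)⁻³)`. -/
lemma hasDerivAt_besselJ_antideriv (m x θ : ℝ) (hp : m - x * cos θ ≠ 0) :
    HasDerivAt (fun θ => sin (m * θ - x * sin θ) / (m - x * cos θ)
        - cos (m * θ - x * sin θ) * (x * sin θ) / (m - x * cos θ) ^ 3)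
      (cos (m * θ - x * sin θ) - cos (m * θ - x * sin θ) *
        (x * cos θ / (m - x * cos θ) ^ 3 - 3 * x ^ 2 * sin θ ^ 2 / (m - x * cos θ) ^ 4)) θ := by
  have hφ : HasDerivAt (fun θ => m * θ - x * sin θ) (m - x * cos θ) θ := by
    simpa using ((hasDerivAt_id θ).const_mul m).fun_sub ((hasDerivAt_sin θ).const_mul x)
  have hp' : HasDerivAt (fun θ => m - x * cos θ) (x * sin θ) θ := by
    simpa using ((hasDerivAt_cos θ).const_mul x).const_sub m
  have hxs : HasDerivAt (fun θ => x * sin θ) (x * cos θ) θ := (hasDerivAt_sin θ).const_mul x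
  refine ((hφ.sin.fun_div hp' hp).sub ((hφ.cos.fun_mul hxs).fun_div (hp'.fun_pow 3)
    (pow_ne_zero 3 hp))).congr_deriv ?_
  field_simp
  ring

section Decay

variable {m : ℤ} {x : ℝ}

lemma continuous_besselJ_remainder (hp : ∀ θ, 0 < m - x * cos θ) :
    Continuous fun θ => cos (m * θ - x * sin θ) *
      (x * cos θ / (m - x * cos θ) ^ 3 - 3 * x ^ 2 * sin θ ^ 2 / (m - x * cos θ) ^ 4) := by
  fun_prop (disch := exact fun θ => pow_ne_zero _ (hp θ).ne')

lemma integral_cos_eq_integral_remainder (hm : |x| < m) :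
    ∫ θ in (0:ℝ)..π, cos (m * θ - x * sin θ) = ∫ θ in (0:ℝ)..π, cos (m * θ - x * sin θ) *
      (x * cos θ / (m - x * cos θ) ^ 3 - 3 * x ^ 2 * sin θ ^ 2 / (m - x * cos θ) ^ 4) := by
  have hp : ∀ θ, 0 < m - x * cos θ := fun θ => by linarith [mul_cos_le_abs x θ]
  have hr := continuous_besselJ_remainder hp
  have hc : Continuous fun θ => cos (m * θ - x * sin θ) := by fun_prop
  have hFTC := intervalIntegral.integral_eq_sub_of_hasDerivAt
    (fun θ _ => hasDerivAt_besselJ_antideriv m x θ (hp θ).ne') ((hc.sub hr).intervalIntegrable 0 π)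
  rw [intervalIntegral.integral_sub (hc.intervalIntegrable 0 π) (hr.intervalIntegrable 0 π)]
    at hFTC
  simp only [sin_pi, mul_zero, sub_zero, sin_int_mul_pi, cos_pi, mul_neg, mul_one, sub_neg_eq_add,
    zero_div, sub_self, sin_zero, cos_zero] at hFTC
  linarith

theorem abs_besselJ_le (hm : |x| < m) :
    |besselJ m x| ≤ |x| / (m - |x|) ^ 3 + 3 * x ^ 2 / (m - |x|) ^ 4 := by
  have hD : 0 < (m : ℝ) - |x| := sub_pos.mpr hm
  have hpD : ∀ θ, (m : ℝ) - |x| ≤ m - x * cos θ := fun θ => by linarith [mul_cos_le_abs x θ]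
  have hbound : ∀ θ ∈ Set.uIoc (0:ℝ) π, ‖cos (m * θ - x * sin θ) *
      (x * cos θ / (m - x * cos θ) ^ 3 - 3 * x ^ 2 * sin θ ^ 2 / (m - x * cos θ) ^ 4)‖ ≤
      |x| / (m - |x|) ^ 3 + 3 * x ^ 2 / (m - |x|) ^ 4 := by
    intro θ _
    have h2 : |3 * x ^ 2 * sin θ ^ 2| ≤ 3 * x ^ 2 := by
      rw [abs_of_nonneg (by positivity)]
      exact mul_le_of_le_one_right (by positivity) (sin_sq_le_one θ)
    rw [norm_mul, Real.norm_eq_abs, ← one_mul (_ + _)]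
    refine mul_le_mul (abs_cos_le_one _) ((abs_sub _ _).trans (add_le_add ?_ ?_))
      (abs_nonneg _) zero_le_one
    · rw [abs_div, abs_of_pos (pow_pos (hD.trans_le (hpD θ)) 3)]
      exact div_le_div₀ (abs_nonneg x) (abs_mul_cos_le_abs x θ) (pow_pos hD 3)
        (pow_le_pow_left₀ hD.le (hpD θ) 3)
    · rw [abs_div, abs_of_pos (pow_pos (hD.trans_le (hpD θ)) 4)]
      exact div_le_div₀ (by positivity) h2 (pow_pos hD 4) (pow_le_pow_left₀ hD.le (hpD θ) 4)
  have := intervalIntegral.norm_integral_le_of_norm_le_const hbound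
  rw [besselJ, integral_cos_eq_integral_remainder hm, abs_mul,
    abs_of_pos (one_div_pos.mpr pi_pos)]
  rw [Real.norm_eq_abs, sub_zero, abs_of_pos pi_pos] at this
  calc 1 / π * |_| ≤ 1 / π * ((|x| / (m - |x|) ^ 3 + 3 * x ^ 2 / (m - |x|) ^ 4) * π) := by gcongr
    _ = _ := by field_simp

theorem abs_besselJ_le_of_le_mul {a D : ℝ} (hD : 0 < D) (hDm : D ≤ m - |x|)
    (hxa : |x| ≤ a * D) : |besselJ m x| ≤ (a + 3 * a ^ 2) / D ^ 2 := by
  have hm : |x| < m := by linarith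
  have haD : 0 ≤ a * D := (abs_nonneg x).trans hxa
  calc |besselJ m x| ≤ |x| / (m - |x|) ^ 3 + 3 * |x| ^ 2 / (m - |x|) ^ 4 := by
        simpa only [sq_abs] using abs_besselJ_le hm
    _ ≤ (a * D) / D ^ 3 + 3 * (a * D) ^ 2 / D ^ 4 := by gcongr
    _ = (a + 3 * a ^ 2) / D ^ 2 := by field_simp

end Decay

theorem besselJ_neg (n : ℤ) (x : ℝ) : besselJ (-n) x = (-1) ^ n * besselJ n x := by
  have hreflect := intervalIntegral.integral_comp_sub_left
    (fun θ => cos (((-n : ℤ) : ℝ) * θ - x * sin θ)) (a := 0) (b := π) π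
  have h : ∀ θ, cos (((-n : ℤ) : ℝ) * (π - θ) - x * sin (π - θ)) =
      (-1) ^ n * cos (n * θ - x * sin θ) := fun θ => by
    rw [sin_pi_sub, ← cos_sub_int_mul_pi]; push_cast; ring_nf
  simp only [sub_self, sub_zero, h, intervalIntegral.integral_const_mul] at hreflect
  rw [besselJ, besselJ, ← hreflect]
  ring

theorem summable_abs_besselJ (x : ℝ) : Summable fun n : ℕ => |besselJ n x| := by
  refine Summable.of_norm_bounded_eventually_nat
    ((Real.summable_one_div_nat_pow.mpr one_lt_two).mul_left 56) ?_
  filter_upwards [eventually_ge_atTop ⌈2 * |x|⌉₊, eventually_ge_atTop 1] with n hxn hn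
  have hn : (1 : ℝ) ≤ n := by exact_mod_cast hn
  have hxn : 2 * |x| ≤ n := Nat.ceil_le.mp hxn
  rw [norm_abs_eq_norm, Real.norm_eq_abs]
  calc |besselJ n x| ≤ (2 + 3 * 2 ^ 2) / (n / 2 : ℝ) ^ 2 :=
        abs_besselJ_le_of_le_mul (by positivity) (by push_cast; linarith) (by linarith)
    _ = 56 * (1 / (n : ℝ) ^ 2) := by field_simp; norm_num

theorem summable_besselJ_int (x : ℝ) : Summable fun n : ℤ => besselJ n x := by
  refine .of_nat_of_neg (summable_abs_besselJ x).of_abs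
    ((summable_abs_besselJ x).of_norm_bounded fun n => ?_)
  rw [besselJ_neg, Real.norm_eq_abs, abs_mul, abs_zpow, abs_neg, abs_one, one_zpow, one_mul]

lemma intervalIntegral.integral_symmetric_eq_integral_add_comp_neg {E : Type*}
    [NormedAddCommGroup E] [NormedSpace ℝ E] {f : ℝ → E} (hf : Continuous f) (a : ℝ) :
    ∫ x in -a..a, f x = ∫ x in 0..a, (f x + f (-x)) := by
  have hf' : Continuous fun x => f (-x) := hf.comp continuous_neg
  rw [intervalIntegral.integral_add (hf.intervalIntegrable _ _) (hf'.intervalIntegrable _ _),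
    intervalIntegral.integral_comp_neg,
    neg_zero, add_comm, intervalIntegral.integral_add_adjacent_intervals
      (hf.intervalIntegrable _ _) (hf.intervalIntegrable _ _)]

local instance : Fact (0 < 2 * π) := ⟨two_pi_pos⟩

lemma periodic_exp_mul_sin (x : ℝ) :
    Function.Periodic (fun β : ℝ => Complex.exp ((x * sin β : ℝ) * Complex.I)) (2 * π) :=
  fun β => by simp [sin_add_two_pi]

noncomputable def expSinCircle (x : ℝ) : C(AddCircle (2 * π), ℂ) :=
  ⟨(periodic_exp_mul_sin x).lift, continuous_coinduced_dom.mpr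
    (by fun_prop : Continuous fun β : ℝ => Complex.exp ((x * sin β : ℝ) * Complex.I))⟩

lemma expSinCircle_coe (x β : ℝ) :
    expSinCircle x β = Complex.exp ((x * sin β : ℝ) * Complex.I) :=
  (periodic_exp_mul_sin x).lift_coe β

theorem fourierCoeff_expSinCircle (x : ℝ) (n : ℤ) :
    fourierCoeff (expSinCircle x) n = besselJ n x := by
  have hterm : ∀ β : ℝ, fourier (-n) (β : AddCircle (2 * π)) • expSinCircle x β =
      Complex.exp ((x * sin β - n * β : ℝ) * Complex.I) := fun β => by
    rw [fourier_coe_apply, expSinCircle_coe, smul_eq_mul, ← Complex.exp_add]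
    congr 1
    push_cast
    field_simp
    ring
  have hsymm : ∀ β : ℝ, Complex.exp ((x * sin β - n * β : ℝ) * Complex.I) +
      Complex.exp ((x * sin (-β) - n * -β : ℝ) * Complex.I) = 2 * (cos (n * β - x * sin β) : ℂ) := 
    fun β => by
    rw [Complex.ofReal_cos, Complex.two_cos]
    push_cast [sin_neg]
    ring_nf
  rw [fourierCoeff_eq_intervalIntegral _ n (-π), show -π + 2 * π = π by ring,
    intervalIntegral.integral_congr fun β _ => hterm β,
    intervalIntegral.integral_symmetric_eq_integral_add_comp_neg (by fun_prop),
    intervalIntegral.integral_congr fun β _ => hsymm β, intervalIntegral.integral_const_mul,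
    intervalIntegral.integral_ofReal, besselJ, Complex.real_smul]
  push_cast
  field_simp

theorem hasSum_besselJ_mul_exp (x β : ℝ) :
    HasSum (fun n : ℤ => (besselJ n x : ℂ) * Complex.exp ((n * β : ℝ) * Complex.I))
      (Complex.exp ((x * sin β : ℝ) * Complex.I)) := by
  have hsum : Summable (fourierCoeff (expSinCircle x)) := by
    simpa only [funext (fourierCoeff_expSinCircle x)] using
      Complex.summable_ofReal.mpr (summable_besselJ_int x)
  convert has_pointwise_sum_fourier_series_of_summable hsum (β : AddCircle (2 * π)) using 1
  · ext n
    rw [fourierCoeff_expSinCircle, fourier_coe_apply, smul_eq_mul]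
    congr 2
    push_cast
    field_simp
  · rw [expSinCircle_coe]

theorem hasSum_besselJ_mul_sin_int (x β : ℝ) :
    HasSum (fun n : ℤ => besselJ n x * sin (n * β)) (sin (x * sin β)) := by
  simpa only [Complex.imCLM_apply, Complex.im_ofReal_mul, Complex.exp_ofReal_mul_I_im] using
    Complex.imCLM.hasSum (hasSum_besselJ_mul_exp x β)

theorem hasSum_besselJ_odd_mul_sin (x β : ℝ) :
    HasSum (fun i : ℕ => 2 * besselJ (2 * i + 1) x * sin ((2 * i + 1) * β)) (sin (x * sin β)) := by
  have hpair : ∀ n : ℕ, besselJ n x * sin ((n : ℤ) * β) + besselJ (-n) x * sin ((-n : ℤ) * β) =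
      (1 - (-1) ^ n) * besselJ n x * sin (n * β) := fun n => by
    rw [besselJ_neg, zpow_natCast]; push_cast; rw [neg_mul, sin_neg]; ring
  have h := (hasSum_besselJ_mul_sin_int x β).nat_add_neg
  simp only [hpair, Int.cast_zero, zero_mul, sin_zero, mul_zero, add_zero] at h
  have hodd : ∀ n ∉ Set.range (fun i : ℕ => 2 * i + 1),
      (1 - (-1) ^ n) * besselJ n x * sin (n * β) = 0 := fun n hn => by
    rcases Nat.even_or_odd' n with ⟨i, rfl | rfl⟩
    · simp [pow_mul]
    · exact absurd ⟨i, rfl⟩ hn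
  convert ((Function.Injective.hasSum_iff (fun _ _ h => by omega) hodd).mpr h) using 2 with i
  rw [Function.comp_apply]
  push_cast [pow_succ, pow_mul]
  ring

/- `besselSinTerm (2 * N * t) (k / (2 * N)) (j - 1)` is the `j`-th summand of the theorem. -/
noncomputable def besselSinTerm (x β : ℝ) (i : ℕ) : ℝ :=
  (besselJ (2 * i + 1) x + besselJ (2 * i + 3) x) * sin ((2 * i + 2) * β)

theorem hasSum_besselSinTerm (x β : ℝ) :
    HasSum (besselSinTerm x β) (sin (x * sin β) * cos β) := by
  set u : ℕ → ℝ := fun i => besselJ (2 * i + 1) x * sin ((2 * i + 2) * β)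
  set v : ℕ → ℝ := fun i => besselJ (2 * i + 1) x * sin (2 * i * β)
  have hodd : Function.Injective fun i : ℕ => 2 * i + 1 := fun _ _ h => by simp only at h; omega
  have hu : Summable u := by
    refine ((summable_abs_besselJ x).comp_injective hodd).of_norm_bounded fun i => ?_
    rw [Real.norm_eq_abs, abs_mul, Function.comp_apply]
    push_cast
    exact mul_le_of_le_one_right (abs_nonneg _) (abs_sin_le_one _)
  have hv : HasSum v (sin (x * sin β) * cos β - ∑' i, u i) := by
    refine (((hasSum_besselJ_odd_mul_sin x β).mul_right (cos β)).sub hu.hasSum).congr_fun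
      fun i => ?_
    simp only [u, v, show (2 * i + 2) * β = (2 * i + 1) * β + β by ring,
      show 2 * i * β = (2 * i + 1) * β - β by ring, sin_add, sin_sub]
    ring
  have hv' : HasSum (fun i => v (i + 1)) (sin (x * sin β) * cos β - ∑' i, u i) := by
    simpa [v] using (hasSum_nat_add_iff' 1).mpr hv
  convert hu.hasSum.add hv' using 1
  · ext i
    simp only [besselSinTerm, u, v]
    push_cast
    ring_nf
  · ring

lemma abs_besselSinTerm_le {x β a D : ℝ} {i : ℕ} (hD : 0 < D) (hDi : D ≤ 2 * i + 1 - |x|)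
    (hxa : |x| ≤ a * D) : |besselSinTerm x β i| ≤ 2 * ((a + 3 * a ^ 2) / D ^ 2) := by
  have h1 : |besselJ (2 * i + 1) x| ≤ (a + 3 * a ^ 2) / D ^ 2 :=
    abs_besselJ_le_of_le_mul hD (by push_cast; linarith) hxa
  have h3 : |besselJ (2 * i + 3) x| ≤ (a + 3 * a ^ 2) / D ^ 2 :=
    abs_besselJ_le_of_le_mul hD (by push_cast; linarith) hxa
  rw [besselSinTerm, abs_mul]
  exact (mul_le_of_le_one_right (abs_nonneg _) (abs_sin_le_one _)).trans
    ((abs_add_le _ _).trans ((add_le_add h1 h3).trans_eq (by ring)))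

theorem tendsto_tsum_besselSinTerm_tail {t : ℝ} (ht0 : 0 ≤ t) (ht1 : t < 1) (β : ℕ → ℝ) :
    Tendsto (fun N : ℕ => ∑' i, besselSinTerm (2 * N * t) (β N) (i + (N - 1))) atTop (𝓝 0) := by
  have h1t : 0 < 1 - t := sub_pos.mpr ht1
  set a := 2 / (1 - t)
  set C := 2 * (a + 3 * a ^ 2)
  have hbound : ∀ N : ℕ, 1 ≤ N * (1 - t) → ∀ i : ℕ,
      ‖besselSinTerm (2 * N * t) (β N) (i + (N - 1))‖ ≤ C / (N * (1 - t) + 2 * i) ^ 2 := by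
    intro N hN i
    have hN1 : 1 ≤ N := by
      have : (1 : ℝ) ≤ N := by nlinarith [Nat.cast_nonneg (α := ℝ) N]
      exact_mod_cast this
    have hax : a * (1 - t) = 2 := div_mul_cancel₀ 2 h1t.ne'
    rw [Real.norm_eq_abs, mul_div_assoc]
    refine abs_besselSinTerm_le (by positivity) ?_ ?_
    · rw [abs_of_nonneg (by positivity)]
      push_cast [Nat.cast_sub hN1]
      linarith
    · rw [abs_of_nonneg (by positivity)]
      nlinarith [Nat.cast_nonneg (α := ℝ) N, Nat.cast_nonneg (α := ℝ) i]
  have hd : Tendsto (fun N : ℕ => N * (1 - t)) atTop atTop :=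
    tendsto_natCast_atTop_atTop.atTop_mul_const h1t
  have hsum : Summable fun i : ℕ => C / ((i : ℝ) + 1) ^ 2 := by
    simpa [div_eq_mul_inv] using (summable_nat_add_iff 1).mpr
      ((Real.summable_one_div_nat_pow.mpr one_lt_two).mul_left C)
  have hpt : ∀ i : ℕ, Tendsto (fun N : ℕ => besselSinTerm (2 * N * t) (β N) (i + (N - 1)))
      atTop (𝓝 0) := fun i =>
    squeeze_zero_norm' ((hd.eventually_ge_atTop 1).mono fun N hN => hbound N hN i)
      (tendsto_const_nhds.div_atTop
        ((tendsto_pow_atTop two_ne_zero).comp (tendsto_atTop_add_const_right _ _ hd)))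
  have hdom : ∀ᶠ N : ℕ in atTop, ∀ i : ℕ,
      ‖besselSinTerm (2 * N * t) (β N) (i + (N - 1))‖ ≤ C / ((i : ℝ) + 1) ^ 2 := by
    filter_upwards [hd.eventually_ge_atTop 1] with N hN i
    refine (hbound N hN i).trans (div_le_div_of_nonneg_left (by positivity) (by positivity) ?_)
    exact pow_le_pow_left₀ (by positivity) (by linarith [Nat.cast_nonneg (α := ℝ) i]) 2
  simpa using tendsto_tsum_of_dominated_convergence hsum hpt hdom

lemma Real.sin_eq_mul_sinc (y : ℝ) : sin y = y * sinc y := by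
  rcases eq_or_ne y 0 with rfl | hy
  · simp
  · rw [sinc_of_ne_zero hy]; field_simp

theorem tendsto_sin_mul_sin_div_mul_cos (c t : ℝ) :
    Tendsto (fun N : ℕ => sin (2 * N * t * sin (c / (2 * N))) * cos (c / (2 * N))) atTop
      (𝓝 (sin (c * t))) := by
  have hβ : Tendsto (fun N : ℕ => c / (2 * N)) atTop (𝓝 0) := by
    simpa [div_mul_eq_div_div] using tendsto_const_div_atTop_nhds_zero_nat (c / 2)
  have hlim : Tendsto (fun N : ℕ => sin (c * t * sinc (c / (2 * N))) * cos (c / (2 * N))) atTop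
      (𝓝 (sin (c * t))) := by
    have hcont : Continuous fun y => sin (c * t * sinc y) * cos y := by fun_prop
    simpa [Function.comp_def] using (hcont.tendsto 0).comp hβ
  refine hlim.congr' ((eventually_ne_atTop 0).mono fun N hN => ?_)
  dsimp only
  rw [sin_eq_mul_sinc (c / (2 * N))]
  field_simp

lemma sum_Icc_besselJ_mul_sin_eq (x c : ℝ) {N : ℕ} (hN : N ≠ 0) :
    ∑ j ∈ Icc 1 (N - 1), (besselJ (2 * (j : ℤ) - 1) x + besselJ (2 * (j : ℤ) + 1) x) *
      sin (c * j / N) = ∑ i ∈ range (N - 1), besselSinTerm x (c / (2 * N)) i := by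
  symm
  refine sum_nbij' (· + 1) (· - 1) (fun i hi => ?_) (fun j hj => ?_) (fun i _ => rfl)
    (fun j hj => ?_) (fun i _ => ?_)
  · simp only [mem_range, mem_Icc] at hi ⊢; omega
  · simp only [mem_range, mem_Icc] at hj ⊢; omega
  · simp only [mem_Icc] at hj; omega
  · simp only [besselSinTerm]
    push_cast
    congr 1
    · ring_nf
    · congr 1
      field_simp

theorem besselJ_sum_tendsto_sin_general (k : ℕ) (t : ℝ) (ht0 : 0 < t) (ht1 : t < 1) :
    Tendsto
      (fun N : ℕ => ∑ j ∈ Finset.Icc 1 (N - 1),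
        (besselJ (2 * (j : ℤ) - 1) (2 * N * t) + besselJ (2 * (j : ℤ) + 1) (2 * N * t))
          * Real.sin ((k : ℝ) * j / N))
      atTop (nhds (Real.sin (k * t))) := by
  have hlim := (tendsto_sin_mul_sin_div_mul_cos k t).sub
    (tendsto_tsum_besselSinTerm_tail ht0.le ht1 fun N => k / (2 * N))
  rw [sub_zero] at hlim
  refine hlim.congr' ((eventually_ne_atTop 0).mono fun N hN => ?_)
  have hsum := hasSum_besselSinTerm (2 * N * t) (k / (2 * N))
  dsimp only
  rw [sum_Icc_besselJ_mul_sin_eq _ _ hN, ← hsum.tsum_eq,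
    ← hsum.summable.sum_add_tsum_nat_add (N - 1), add_sub_cancel_right]

/-- For `k ≥ 1` and `0 < t < 1`,
`Σ_{j=1}^{N-1} (J_{2j-1}(2Nt) + J_{2j+1}(2Nt)) sin(kj/N) → sin(kt)` as `N → ∞`. -/
theorem besselJ_sum_tendsto_sin (k : ℕ) (hk : 1 ≤ k) (t : ℝ) (ht0 : 0 < t) (ht1 : t < 1) :
    Tendsto
      (fun N : ℕ => ∑ j ∈ Finset.Icc 1 (N - 1),
        (besselJ (2 * (j : ℤ) - 1) (2 * N * t) + besselJ (2 * (j : ℤ) + 1) (2 * N * t))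
          * Real.sin ((k : ℝ) * j / N))
      atTop (nhds (Real.sin (k * t))) :=
  besselJ_sum_tendsto_sin_general k t ht0 ht1
end
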